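/- arXiv:2503.11891 — 4 statements merged into one kernel-verified Lean document; each statement's English description precedes it below -/
import Mathlib

section
/- Let W ≠ 0 be a real number and L ≥ 1. Among all factorizations W = V_L ··· V_1 by real numbers V_1,...,V_L, the function F(V_1,...,V_L) = ∑_{I⊊{1,...,L}} η^{2(L−#I)} ∏_{m∈I} V_m² attains its minimum exactly when V_ℓ² = V_m² for all ℓ, m (equivalently |V_ℓ| = |W|^{1/L} for all ℓ), in which case its value equals ∑_{m=0}^{L−1} C(L,m) η^{2(L−m)} W^{2m/L}. -/
/-!
Group the proper subsets `I` by their size `k < L` and put `a m = V m ^ 2`, so that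
`∏ a = W ^ 2`. The size-`k` group contributes `η ^ (2 (L - k)) e_k(a)`, where `e_k` is the
`k`-th elementary symmetric sum. AM–GM applied to its `C(L, k)` products `∏_{m ∈ I} a m`,
whose total product is `(∏ a) ^ C(L - 1, k - 1)` by double counting, gives
`e_k(a) ≥ C(L, k) |W| ^ (2k/L)`. Equality in the sum forces equality for `k = 1`, which is
the equality case of AM–GM for `a`; conversely, if all `a m` agree every term is sharp.
-/

open Finset

namespace Finset

variable {ι : Type*} [DecidableEq ι]

theorem sum_powerset_erase_self {M : Type*} [AddCommMonoid M] (s : Finset ι)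
    (f : Finset ι → M) :
    ∑ I ∈ s.powerset.erase s, f I = ∑ k ∈ range #s, ∑ I ∈ s.powersetCard k, f I := by
  have hsplit : s.powerset.erase s = (range #s).biUnion (s.powersetCard ·) := by
    ext I
    simp only [mem_erase, mem_powerset, mem_biUnion, mem_range, mem_powersetCard]
    constructor
    · rintro ⟨hne, hI⟩
      exact ⟨#I, card_lt_card (ssubset_of_subset_of_ne hI hne), hI, rfl⟩
    · rintro ⟨k, hk, hI, rfl⟩
      exact ⟨by rintro rfl; exact hk.false, hI⟩
  rw [hsplit, sum_biUnion (s.pairwise_disjoint_powersetCard.set_pairwise _)]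

theorem prod_powersetCard_succ_prod {M : Type*} [CommMonoid M] (s : Finset ι)
    (k : ℕ) (f : ι → M) :
    ∏ I ∈ s.powersetCard (k + 1), ∏ i ∈ I, f i = (∏ i ∈ s, f i) ^ (#s - 1).choose k := by
  rw [prod_comm' (t' := s) (s' := fun i => (s.powersetCard (k + 1)).filter ({i} ⊆ ·))]
  · rw [← prod_pow]
    refine prod_congr rfl fun i hi => ?_
    rw [prod_const, card_filter_powersetCard_subset _ _ _ (singleton_subset_iff.2 hi)
      (by simp), card_singleton, Nat.add_sub_cancel]
  · intro I i
    simp only [mem_powersetCard, mem_filter, singleton_subset_iff]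
    exact ⟨fun ⟨hI, hi⟩ => ⟨⟨hI, hi⟩, hI.1 hi⟩, fun ⟨h, _⟩ => h⟩

end Finset

namespace Real

variable {ι : Type*}

theorem choose_mul_prod_rpow_le_sum_powersetCard_prod [DecidableEq ι] (s : Finset ι)
    {a : ι → ℝ} (ha : ∀ i ∈ s, 0 ≤ a i) (k : ℕ) :
    ((#s).choose k : ℝ) * (∏ i ∈ s, a i) ^ ((k : ℝ) / #s)
      ≤ ∑ I ∈ s.powersetCard k, ∏ i ∈ I, a i := by
  have hprod_nonneg : ∀ I ∈ s.powersetCard k, 0 ≤ ∏ i ∈ I, a i :=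
    fun I hI => prod_nonneg fun i hi => ha i ((mem_powersetCard.1 hI).1 hi)
  obtain hks | hks := lt_or_ge #s k
  · simpa [Nat.choose_eq_zero_of_lt hks] using sum_nonneg hprod_nonneg
  cases k with
  | zero => simp
  | succ j =>
    have hN : (0 : ℝ) < (#s).choose (j + 1) := mod_cast Nat.choose_pos hks
    have hexp : ((#s - 1).choose j : ℝ) * ((#s).choose (j + 1) : ℝ)⁻¹
        = ((j + 1 : ℕ) : ℝ) / #s := by
      have h := Nat.add_one_mul_choose_eq (#s - 1) j
      rw [Nat.sub_add_cancel (by omega)] at h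
      have hs : (0 : ℝ) < #s := mod_cast (by omega : 0 < #s)
      rw [eq_div_iff hs.ne', mul_right_comm, ← div_eq_mul_inv, div_eq_iff hN.ne']
      exact_mod_cast (mul_comm _ _).trans (h.trans (mul_comm _ _))
    have amgm := geom_mean_le_arith_mean (s.powersetCard (j + 1)) (fun _ => 1)
      (fun I => ∏ i ∈ I, a i) (fun _ _ => zero_le_one) (by simpa using hN) hprod_nonneg
    simp only [rpow_one, one_mul, sum_const, card_powersetCard, nsmul_eq_mul, mul_one,
      prod_powersetCard_succ_prod] at amgm
    rwa [← rpow_natCast, ← rpow_mul (prod_nonneg ha), hexp, le_div_iff₀ hN, mul_comm] at amgm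

theorem eq_of_sum_eq_card_mul_prod_rpow (s : Finset ι) {a : ι → ℝ} (ha : ∀ i ∈ s, 0 ≤ a i)
    (h : ∑ i ∈ s, a i = #s * (∏ i ∈ s, a i) ^ ((1 : ℝ) / #s)) :
    ∀ i ∈ s, ∀ j ∈ s, a i = a j := by
  obtain rfl | hs := s.eq_empty_or_nonempty
  · simp
  have hn : (0 : ℝ) < #s := mod_cast hs.card_pos
  refine (geom_mean_eq_arith_mean_weighted_iff_of_pos s (fun _ => 1 / #s) a
    (fun _ _ => by positivity) (by simp [hn.ne']) ha).1 ?_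
  rw [finsetProd_rpow s a ha, ← mul_sum, h, one_div, inv_mul_cancel_left₀ hn.ne']

theorem sum_powersetCard_prod_of_forall_eq (s : Finset ι) {a : ι → ℝ}
    (ha : ∀ i ∈ s, 0 ≤ a i) (hconst : ∀ i ∈ s, ∀ j ∈ s, a i = a j) (k : ℕ) :
    ∑ I ∈ s.powersetCard k, ∏ i ∈ I, a i
      = ((#s).choose k : ℝ) * (∏ i ∈ s, a i) ^ ((k : ℝ) / #s) := by
  obtain rfl | ⟨i₀, hi₀⟩ := s.eq_empty_or_nonempty
  · cases k
    · simp
    · rw [powersetCard_eq_empty.2 (by simp)]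
      simp
  have hprod : ∀ I ⊆ s, ∏ i ∈ I, a i = a i₀ ^ #I := fun I hI =>
    prod_eq_pow_card fun i hi => hconst i (hI hi) i₀ hi₀
  have hn : (#s : ℝ) ≠ 0 := mod_cast (card_pos.2 ⟨i₀, hi₀⟩).ne'
  rw [hprod s subset_rfl, ← rpow_natCast, ← rpow_mul (ha i₀ hi₀), mul_div_cancel₀ _ hn,
    rpow_natCast, sum_congr rfl fun I hI => by rw [hprod I (mem_powersetCard.1 hI).1,
      (mem_powersetCard.1 hI).2], sum_const, card_powersetCard, nsmul_eq_mul]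

variable [DecidableEq ι] (s : Finset ι) {a : ι → ℝ} {c : ℝ}

theorem sum_erase_self_pow_mul_prod_eq :
    ∑ I ∈ s.powerset.erase s, c ^ (#s - #I) * ∏ i ∈ I, a i
      = ∑ k ∈ range #s, c ^ (#s - k) * ∑ I ∈ s.powersetCard k, ∏ i ∈ I, a i := by
  rw [sum_powerset_erase_self]
  refine sum_congr rfl fun k _ => ?_
  rw [mul_sum]
  exact sum_congr rfl fun I hI => by rw [(mem_powersetCard.1 hI).2]

theorem choose_mul_pow_mul_prod_rpow_le (ha : ∀ i ∈ s, 0 ≤ a i) (hc : 0 ≤ c) (k : ℕ) :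
    ((#s).choose k : ℝ) * c ^ (#s - k) * (∏ i ∈ s, a i) ^ ((k : ℝ) / #s)
      ≤ c ^ (#s - k) * ∑ I ∈ s.powersetCard k, ∏ i ∈ I, a i := by
  rw [mul_right_comm, mul_comm]
  exact mul_le_mul_of_nonneg_left (choose_mul_prod_rpow_le_sum_powersetCard_prod s ha k)
    (pow_nonneg hc _)

theorem sum_range_choose_mul_pow_mul_prod_rpow_le (ha : ∀ i ∈ s, 0 ≤ a i) (hc : 0 ≤ c) :
    ∑ k ∈ range #s, ((#s).choose k : ℝ) * c ^ (#s - k) * (∏ i ∈ s, a i) ^ ((k : ℝ) / #s)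
      ≤ ∑ I ∈ s.powerset.erase s, c ^ (#s - #I) * ∏ i ∈ I, a i := by
  rw [sum_erase_self_pow_mul_prod_eq]
  exact sum_le_sum fun k _ => choose_mul_pow_mul_prod_rpow_le s ha hc k

theorem sum_erase_self_pow_mul_prod_eq_iff (ha : ∀ i ∈ s, 0 ≤ a i) (hc : 0 < c) :
    ∑ I ∈ s.powerset.erase s, c ^ (#s - #I) * ∏ i ∈ I, a i
        = ∑ k ∈ range #s, ((#s).choose k : ℝ) * c ^ (#s - k) * (∏ i ∈ s, a i) ^ ((k : ℝ) / #s)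
      ↔ ∀ i ∈ s, ∀ j ∈ s, a i = a j := by
  rw [sum_erase_self_pow_mul_prod_eq, eq_comm,
    sum_eq_sum_iff_of_le fun k _ => choose_mul_pow_mul_prod_rpow_le s ha hc.le k]
  constructor
  · intro hterms
    obtain hs | hs := le_or_gt #s 1
    · exact fun i hi j hj => congrArg a (card_le_one.1 hs i hi j hj)
    have h1 := hterms 1 (mem_range.2 hs)
    rw [mul_comm ((#s).choose 1 : ℝ), mul_assoc, Nat.choose_one_right, Nat.cast_one,
      powersetCard_one, sum_map] at h1
    simp only [Function.Embedding.coeFn_mk, prod_singleton] at h1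
    exact eq_of_sum_eq_card_mul_prod_rpow s ha
      (mul_left_cancel₀ (pow_pos hc _).ne' h1).symm
  · intro hconst k _
    rw [sum_powersetCard_prod_of_forall_eq s ha hconst]
    ring

end Real

theorem regularizer_min_at_balanced_factorization_general
    (L : ℕ) (η : ℝ) (hη : 0 < η) (W : ℝ)
    (V : Fin L → ℝ) (hV : ∏ ℓ, V ℓ = W) :
    (∑ m ∈ Finset.range L,
        (L.choose m : ℝ) * η ^ (2 * (L - m)) * |W| ^ ((2 * m : ℝ) / L))
      ≤ ∑ I ∈ (Finset.univ : Finset (Fin L)).powerset.erase Finset.univ,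
          η ^ (2 * (L - I.card)) * ∏ m ∈ I, (V m) ^ 2
    ∧ ((∑ I ∈ (Finset.univ : Finset (Fin L)).powerset.erase Finset.univ,
          η ^ (2 * (L - I.card)) * ∏ m ∈ I, (V m) ^ 2)
        = ∑ m ∈ Finset.range L,
            (L.choose m : ℝ) * η ^ (2 * (L - m)) * |W| ^ ((2 * m : ℝ) / L)
      ↔ ∀ ℓ m, (V ℓ) ^ 2 = (V m) ^ 2) := by
  have hsq : ∀ ℓ ∈ (univ : Finset (Fin L)), 0 ≤ V ℓ ^ 2 := fun ℓ _ => sq_nonneg (V ℓ)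
  have hbound : ∀ m : ℕ, |W| ^ ((2 * m : ℝ) / L) = (∏ ℓ, V ℓ ^ 2) ^ ((m : ℝ) / L) := by
    intro m
    rw [prod_pow, hV, ← sq_abs, ← Real.rpow_natCast, ← Real.rpow_mul (abs_nonneg W),
      mul_div_assoc, Nat.cast_ofNat]
  have hle := Real.sum_range_choose_mul_pow_mul_prod_rpow_le univ hsq (sq_nonneg η)
  have hiff := Real.sum_erase_self_pow_mul_prod_eq_iff univ hsq (pow_pos hη 2)
  simp only [card_fin, mem_univ, forall_const] at hle hiff
  simp only [hbound, pow_mul]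
  exact ⟨hle, hiff⟩

/-- Among all factorizations `W = V_L ⋯ V_1` of a nonzero real `W`, the regularizer
`F(V) = ∑_{I ⊊ {1,…,L}} η^{2(L−#I)} ∏_{m∈I} V_m²` attains its minimum
`∑_{m<L} C(L,m) η^{2(L−m)} |W|^{2m/L}` exactly at balanced factorizations
(`V_ℓ² = V_m²` for all `ℓ, m`). -/
theorem regularizer_min_at_balanced_factorization
    (L : ℕ) (hL : 1 ≤ L) (η : ℝ) (hη : 0 < η) (W : ℝ) (hW : W ≠ 0)
    (V : Fin L → ℝ) (hV : ∏ ℓ, V ℓ = W) :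
    (∑ m ∈ Finset.range L,
        (L.choose m : ℝ) * η ^ (2 * (L - m)) * |W| ^ ((2 * m : ℝ) / L))
      ≤ ∑ I ∈ (Finset.univ : Finset (Fin L)).powerset.erase Finset.univ,
          η ^ (2 * (L - I.card)) * ∏ m ∈ I, (V m) ^ 2
    ∧ ((∑ I ∈ (Finset.univ : Finset (Fin L)).powerset.erase Finset.univ,
          η ^ (2 * (L - I.card)) * ∏ m ∈ I, (V m) ^ 2)
        = ∑ m ∈ Finset.range L,
            (L.choose m : ℝ) * η ^ (2 * (L - m)) * |W| ^ ((2 * m : ℝ) / L)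
      ↔ ∀ ℓ m, (V ℓ) ^ 2 = (V m) ^ 2) :=
  regularizer_min_at_balanced_factorization_general L η hη W V hV
end

section
/- Fix L ≥ 3 and c ∈ (0,1), and suppose λ ∈ (0,1) satisfies λ^{1/(L−1) − 1}(λ² + c) = 1. Then c^{(L−1)/(L−2)} ≤ λ ≤ √(1 − c). -/
/-!
Writing `b = (L - 2)/(L - 1) ∈ (0, 1)`, the defining equation says `λ² + c = λ ^ b`.
Dropping `λ²` gives `c ≤ λ ^ b`, i.e. `c ^ (1/b) ≤ λ`; and `λ ^ b < 1` for `λ < 1` gives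
`λ² < 1 - c`.
-/

namespace Real

lemma eq_rpow_of_rpow_neg_mul_eq_one {x b y : ℝ} (hx : 0 < x) (h : x ^ (-b) * y = 1) :
    y = x ^ b := by
  rw [rpow_neg hx.le, inv_mul_eq_one₀ (rpow_pos_of_pos hx b).ne'] at h
  exact h.symm

variable {lam b c : ℝ}

lemma rpow_inv_le_of_sq_add_eq_rpow (hlam : 0 < lam) (hb : 0 < b) (hc : 0 ≤ c)
    (h : lam ^ 2 + c = lam ^ b) : c ^ b⁻¹ ≤ lam :=
  (rpow_inv_le_iff_of_pos hc hlam.le hb).2 (by nlinarith)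

lemma le_sqrt_one_sub_of_sq_add_eq_rpow (hlam0 : 0 < lam) (hlam1 : lam < 1) (hb : 0 < b)
    (h : lam ^ 2 + c = lam ^ b) : lam ≤ √(1 - c) := by
  have hlt : lam ^ b < 1 := rpow_lt_one hlam0.le hlam1 hb
  exact (le_sqrt' hlam0).2 (by linarith)

end Real

theorem shrinkage_factor_bounds_general
    (L : ℕ) (hL : 3 ≤ L) (c : ℝ) (hc0 : 0 < c)
    (lam : ℝ) (hlam0 : 0 < lam) (hlam1 : lam < 1)
    (heq : lam ^ (((2 : ℝ) - L) / ((L : ℝ) - 1)) * (lam ^ 2 + c) = 1) :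
    c ^ (((L : ℝ) - 1) / ((L : ℝ) - 2)) ≤ lam ∧ lam ≤ Real.sqrt (1 - c) := by
  have hL3 : (3 : ℝ) ≤ L := by exact_mod_cast hL
  set b : ℝ := ((L : ℝ) - 2) / ((L : ℝ) - 1)
  have hb : 0 < b := div_pos (by linarith) (by linarith)
  have hexp : ((2 : ℝ) - L) / ((L : ℝ) - 1) = -b := by rw [← neg_div, neg_sub]
  have hfix : lam ^ 2 + c = lam ^ b :=
    Real.eq_rpow_of_rpow_neg_mul_eq_one hlam0 (hexp ▸ heq)
  refine ⟨?_, Real.le_sqrt_one_sub_of_sq_add_eq_rpow hlam0 hlam1 hb hfix⟩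
  rw [← inv_div]
  exact Real.rpow_inv_le_of_sq_add_eq_rpow hlam0 hb hc0.le hfix

/-- Localization of the shrinkage factors: for `L ≥ 3`, `c ∈ (0,1)` and `λ ∈ (0,1)`
with `λ^{(2−L)/(L−1)} (λ² + c) = 1`, one has `c^{(L−1)/(L−2)} ≤ λ ≤ √(1 − c)`. -/
theorem shrinkage_factor_bounds
    (L : ℕ) (hL : 3 ≤ L) (c : ℝ) (hc0 : 0 < c) (hc1 : c < 1)
    (lam : ℝ) (hlam0 : 0 < lam) (hlam1 : lam < 1)
    (heq : lam ^ (((2 : ℝ) - L) / ((L : ℝ) - 1)) * (lam ^ 2 + c) = 1) :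
    c ^ (((L : ℝ) - 1) / ((L : ℝ) - 2)) ≤ lam ∧ lam ≤ Real.sqrt (1 - c) :=
  shrinkage_factor_bounds_general L hL c hc0 lam hlam0 hlam1 heq
end

section
/- Let W_1,...,W_L be d×d diagonal matrices following the gradient flow of the regularized loss L_R(W_1,...,W_L) = ‖W* − W_L···W_1‖² + Tr(∏_ℓ (W_ℓ² + η² I) − ∏_ℓ W_ℓ²), i.e., dW_ℓ/dt = −∇_{W_ℓ} L_R. Then for each ℓ, d/dt (W_ℓ²(t) − W_{ℓ+1}²(t)) = −4η² (∏_{r≠ℓ,ℓ+1} (W_r²(t) + η² I)) (W_ℓ²(t) − W_{ℓ+1}²(t)). -/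
open Finset

/-- The regularized loss `L_R(W₁,…,W_L) = ‖W* − W_L⋯W₁‖² + Tr(∏(W_ℓ²+η²I) − ∏W_ℓ²)`
for diagonal matrices `W_ℓ = diagonal (v ℓ)` and `W* = diagonal Wstar`, expressed in terms
of the diagonal entries. -/
def diagRegLoss (d L : ℕ) (η : ℝ) (Wstar : Fin d → ℝ) (v : Fin L → Fin d → ℝ) : ℝ :=
  (∑ h, (Wstar h - ∏ ℓ, v ℓ h) ^ 2) +
    ∑ h, ((∏ ℓ, ((v ℓ h) ^ 2 + η ^ 2)) - ∏ ℓ, (v ℓ h) ^ 2)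

/-!
Everything decouples over the diagonal entries `h`, so fix one and write `u_r` for the entry of
layer `r`, `P = ∏_r u_r`. The partial derivative of the loss in `u_i` is
`2 (P - W*) ∏_{r ≠ i} u_r + 2 u_i (∏_{r ≠ i} (u_r² + η²) - ∏_{r ≠ i} u_r²)`, so along the flow
`d/dt u_i² = -2 u_i ∂_i L = -4 (P - W*) P + 4 P² - 4 u_i² ∏_{r ≠ i} (u_r² + η²)`.
Only the last term depends on `i`; for two layers `i ≠ j` it equals
`-4 ∏_{r ≠ i,j} (u_r² + η²) · u_i² (u_j² + η²)`, and the difference of the two is the claim.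
-/

theorem Finset.prod_apply_update_eq_mul_prod_erase {ι α M : Type*} [Fintype ι] [DecidableEq ι]
    [CommMonoid M] (g : ι → α → M) (u : ι → α) (i : ι) (x : α) :
    ∏ r, g r (Function.update u i x r) = g i x * ∏ r ∈ univ.erase i, g r (u r) := by
  simp_rw [Function.apply_update g, prod_update_of_mem (mem_univ i), sdiff_singleton_eq_erase]

section EntryLoss

variable {ι : Type*} [Fintype ι] [DecidableEq ι] (η a : ℝ) (u : ι → ℝ)

def entryRegLoss : ℝ :=
  (a - ∏ r, u r) ^ 2 + ((∏ r, (u r ^ 2 + η ^ 2)) - ∏ r, u r ^ 2)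

def entryRegLossGrad (i : ι) : ℝ :=
  2 * (∏ r, u r - a) * ∏ r ∈ univ.erase i, u r +
    2 * u i * (∏ r ∈ univ.erase i, (u r ^ 2 + η ^ 2) - ∏ r ∈ univ.erase i, u r ^ 2)

theorem hasDerivAt_entryRegLoss_update (i : ι) :
    HasDerivAt (fun x => entryRegLoss η a (Function.update u i x))
      (entryRegLossGrad η a u i) (u i) := by
  set p := ∏ r ∈ univ.erase i, u r
  set q := ∏ r ∈ univ.erase i, (u r ^ 2 + η ^ 2)
  set p₂ := ∏ r ∈ univ.erase i, u r ^ 2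
  have hloss : (fun x => entryRegLoss η a (Function.update u i x)) =
      fun x => (a - x * p) ^ 2 + ((x ^ 2 + η ^ 2) * q - x ^ 2 * p₂) := by
    funext x
    simp only [entryRegLoss, prod_apply_update_eq_mul_prod_erase (fun _ y => y),
      prod_apply_update_eq_mul_prod_erase (fun _ y => y ^ 2 + η ^ 2),
      prod_apply_update_eq_mul_prod_erase (fun _ y => y ^ 2)]
    rfl
  have hP : ∏ r, u r = u i * p := (mul_prod_erase univ u (mem_univ i)).symm
  rw [hloss]
  have hx := hasDerivAt_id (u i)
  refine ((((hx.mul_const p).const_sub a).fun_pow 2).add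
    ((((hx.fun_pow 2).add_const (η ^ 2)).mul_const q).sub
      ((hx.fun_pow 2).mul_const p₂))).congr_deriv ?_
  simp only [entryRegLossGrad, hP, id]
  ring

theorem mul_entryRegLossGrad (i : ι) :
    u i * entryRegLossGrad η a u i =
      2 * (∏ r, u r - a) * ∏ r, u r - 2 * ∏ r, u r ^ 2 +
        2 * u i ^ 2 * ∏ r ∈ univ.erase i, (u r ^ 2 + η ^ 2) := by
  rw [entryRegLossGrad, ← mul_prod_erase univ u (mem_univ i),
    ← mul_prod_erase univ (fun r => u r ^ 2) (mem_univ i)]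
  ring

theorem mul_entryRegLossGrad_sub_mul_entryRegLossGrad {i j : ι} (hij : i ≠ j) :
    u i * entryRegLossGrad η a u i - u j * entryRegLossGrad η a u j =
      2 * η ^ 2 * (∏ r ∈ (univ.erase i).erase j, (u r ^ 2 + η ^ 2)) * (u i ^ 2 - u j ^ 2) := by
  have hi : ∏ r ∈ univ.erase i, (u r ^ 2 + η ^ 2) =
      (u j ^ 2 + η ^ 2) * ∏ r ∈ (univ.erase i).erase j, (u r ^ 2 + η ^ 2) :=
    (mul_prod_erase _ _ (mem_erase.mpr ⟨hij.symm, mem_univ j⟩)).symm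
  have hj : ∏ r ∈ univ.erase j, (u r ^ 2 + η ^ 2) =
      (u i ^ 2 + η ^ 2) * ∏ r ∈ (univ.erase i).erase j, (u r ^ 2 + η ^ 2) := by
    rw [erase_right_comm]
    exact (mul_prod_erase _ _ (mem_erase.mpr ⟨hij, mem_univ i⟩)).symm
  rw [mul_entryRegLossGrad, mul_entryRegLossGrad, hi, hj]
  ring

end EntryLoss

theorem diagRegLoss_eq_sum_entryRegLoss {d L : ℕ} (η : ℝ) (Wstar : Fin d → ℝ)
    (v : Fin L → Fin d → ℝ) :
    diagRegLoss d L η Wstar v = ∑ h, entryRegLoss η (Wstar h) (fun r => v r h) := by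
  simp only [diagRegLoss, entryRegLoss, sum_add_distrib]

theorem diagRegLoss_update {d L : ℕ} (η : ℝ) (Wstar : Fin d → ℝ) (v : Fin L → Fin d → ℝ)
    (ℓ : Fin L) (h : Fin d) (x : ℝ) :
    diagRegLoss d L η Wstar (Function.update v ℓ (Function.update (v ℓ) h x)) =
      entryRegLoss η (Wstar h) (Function.update (fun r => v r h) ℓ x) +
        ∑ h' ∈ univ.erase h, entryRegLoss η (Wstar h') (fun r => v r h') := by
  rw [diagRegLoss_eq_sum_entryRegLoss, ← add_sum_erase _ _ (mem_univ h)]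
  congr 1
  · congr 1
    funext r
    rcases eq_or_ne r ℓ with rfl | hr <;> simp [*]
  · refine sum_congr rfl fun h' hh' => congr_arg _ (funext fun r => ?_)
    rcases eq_or_ne r ℓ with rfl | hr <;> simp [*, ne_of_mem_erase hh']

theorem hasDerivAt_diagRegLoss_update {d L : ℕ} (η : ℝ) (Wstar : Fin d → ℝ)
    (v : Fin L → Fin d → ℝ) (ℓ : Fin L) (h : Fin d) :
    HasDerivAt (fun x => diagRegLoss d L η Wstar (Function.update v ℓ (Function.update (v ℓ) h x)))
      (entryRegLossGrad η (Wstar h) (fun r => v r h) ℓ) (v ℓ h) := by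
  simp only [diagRegLoss_update]
  exact (hasDerivAt_entryRegLoss_update η (Wstar h) (fun r => v r h) ℓ).add_const _

theorem balancing_ode_regularized_flow_general
    (d L : ℕ) (η : ℝ)
    (Wstar : Fin d → ℝ) (w : ℝ → Fin L → Fin d → ℝ)
    (hflow : ∀ t (ℓ : Fin L) (h : Fin d),
      HasDerivAt (fun s => w s ℓ h)
        (-(deriv (fun x => diagRegLoss d L η Wstar
            (Function.update (w t) ℓ (Function.update (w t ℓ) h x))) (w t ℓ h))) t)
    (ℓ ℓ' : Fin L) (hsucc : (ℓ' : ℕ) = (ℓ : ℕ) + 1) :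
    ∀ t (h : Fin d),
      HasDerivAt (fun s => (w s ℓ h) ^ 2 - (w s ℓ' h) ^ 2)
        (-(4 * η ^ 2) *
            (∏ r ∈ (Finset.univ.erase ℓ).erase ℓ', ((w t r h) ^ 2 + η ^ 2)) *
            ((w t ℓ h) ^ 2 - (w t ℓ' h) ^ 2)) t := by
  intro t h
  have hne : ℓ ≠ ℓ' := Fin.ne_of_val_ne (by omega)
  have hderiv : ∀ k, HasDerivAt (fun s => w s k h)
      (-entryRegLossGrad η (Wstar h) (fun r => w t r h) k) t := fun k => by
    simpa only [(hasDerivAt_diagRegLoss_update η Wstar (w t) k h).deriv] using hflow t k h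
  refine (((hderiv ℓ).fun_pow 2).sub ((hderiv ℓ').fun_pow 2)).congr_deriv ?_
  linear_combination (-2) *
    mul_entryRegLossGrad_sub_mul_entryRegLossGrad η (Wstar h) (fun r => w t r h) hne

/-- Along the gradient flow of the regularized loss (stated entrywise for the diagonal
entries `w t ℓ h` of the weight matrices `W_ℓ(t)`), the difference of squares of
consecutive layers satisfies
`d/dt (W_ℓ² − W_{ℓ+1}²) = −4η² (∏_{r≠ℓ,ℓ+1} (W_r² + η² I)) (W_ℓ² − W_{ℓ+1}²)`. -/
theorem balancing_ode_regularized_flow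
    (d L : ℕ) (hd : 1 ≤ d) (hL : 2 ≤ L) (η : ℝ) (hη : 0 < η)
    (Wstar : Fin d → ℝ) (w : ℝ → Fin L → Fin d → ℝ)
    (hflow : ∀ t (ℓ : Fin L) (h : Fin d),
      HasDerivAt (fun s => w s ℓ h)
        (-(deriv (fun x => diagRegLoss d L η Wstar
            (Function.update (w t) ℓ (Function.update (w t ℓ) h x))) (w t ℓ h))) t)
    (ℓ ℓ' : Fin L) (hsucc : (ℓ' : ℕ) = (ℓ : ℕ) + 1) :
    ∀ t (h : Fin d),
      HasDerivAt (fun s => (w s ℓ h) ^ 2 - (w s ℓ' h) ^ 2)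
        (-(4 * η ^ 2) *
            (∏ r ∈ (Finset.univ.erase ℓ).erase ℓ', ((w t r h) ^ 2 + η ^ 2)) *
            ((w t ℓ h) ^ 2 - (w t ℓ' h) ^ 2)) t :=
  balancing_ode_regularized_flow_general d L η Wstar w hflow ℓ ℓ' hsucc
end

section
/- Let W_1,...,W_L be d×d diagonal matrices and I ⊊ {1,...,L}. Then ‖∏_{m∈I} W_m²‖ ≤ ‖∏_{m∈I}(W_m² + η² I_d)‖ ≤ η^{−2(L−#I)} · R(W_1,...,W_L), where R(W_1,...,W_L) = Tr(∏_{ℓ=1}^L (W_ℓ² + η² I_d) − ∏_{ℓ=1}^L W_ℓ²), and also ‖∏_{m∈I} W_m‖² ≤ η^{−2(L−#I)} · R(W_1,...,W_L). -/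
open Matrix Finset

/-- Product bounds via the regularizer: for diagonal matrices `W_ℓ = diagonal (w ℓ)`,
`I ⊊ {1,…,L}`, `R = Tr(∏(W_ℓ²+η²I) − ∏W_ℓ²)`, and `‖·‖` the Frobenius norm,
`‖∏_{m∈I} W_m²‖ ≤ ‖∏_{m∈I}(W_m²+η²I)‖ ≤ η^{−2(L−#I)} R` and
`‖∏_{m∈I} W_m‖² ≤ η^{−2(L−#I)} R`. -/
theorem prod_bound_via_regularizer
    (d L : ℕ) (hd : 1 ≤ d) (hL : 1 ≤ L) (η : ℝ) (hη : 0 < η)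
    (w : Fin L → Fin d → ℝ) (I : Finset (Fin L)) (hI : I ≠ Finset.univ) :
    Real.sqrt (Matrix.trace ((Matrix.diagonal fun h => ∏ m ∈ I, (w m h) ^ 2) *
          (Matrix.diagonal fun h => ∏ m ∈ I, (w m h) ^ 2)ᵀ))
        ≤ Real.sqrt (Matrix.trace
            ((Matrix.diagonal fun h => ∏ m ∈ I, ((w m h) ^ 2 + η ^ 2)) *
              (Matrix.diagonal fun h => ∏ m ∈ I, ((w m h) ^ 2 + η ^ 2))ᵀ))
    ∧ Real.sqrt (Matrix.trace
            ((Matrix.diagonal fun h => ∏ m ∈ I, ((w m h) ^ 2 + η ^ 2)) *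
              (Matrix.diagonal fun h => ∏ m ∈ I, ((w m h) ^ 2 + η ^ 2))ᵀ))
        ≤ (η ^ (2 * (L - I.card)))⁻¹ *
            Matrix.trace ((Matrix.diagonal fun h => ∏ ℓ, ((w ℓ h) ^ 2 + η ^ 2))
              - Matrix.diagonal fun h => ∏ ℓ, (w ℓ h) ^ 2)
    ∧ Matrix.trace ((Matrix.diagonal fun h => ∏ m ∈ I, w m h) *
          (Matrix.diagonal fun h => ∏ m ∈ I, w m h)ᵀ)
        ≤ (η ^ (2 * (L - I.card)))⁻¹ *
            Matrix.trace ((Matrix.diagonal fun h => ∏ ℓ, ((w ℓ h) ^ 2 + η ^ 2))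
              - Matrix.diagonal fun h => ∏ ℓ, (w ℓ h) ^ 2) := by
  classical
  set a : Fin d → ℝ := fun h => ∏ m ∈ I, (w m h) ^ 2 with ha_def
  set b : Fin d → ℝ := fun h => ∏ m ∈ I, ((w m h) ^ 2 + η ^ 2) with hb_def
  set c : Fin d → ℝ := fun h => ∏ ℓ, ((w ℓ h) ^ 2 + η ^ 2) - ∏ ℓ, (w ℓ h) ^ 2 with hc_def
  have ha0 : ∀ h, 0 ≤ a h := fun h => Finset.prod_nonneg fun m _ => sq_nonneg _
  have hb0 : ∀ h, 0 ≤ b h := fun h =>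
    Finset.prod_nonneg fun m _ => by positivity
  have hab : ∀ h, a h ≤ b h := fun h =>
    Finset.prod_le_prod (fun m _ => sq_nonneg _) (fun m _ => by nlinarith [sq_nonneg η])
  -- choose m₀ ∉ I
  obtain ⟨m₀, hm₀⟩ : ∃ m₀, m₀ ∉ I := by
    by_contra h
    push_neg at h
    exact hI (Finset.eq_univ_iff_forall.2 h)
  have hIsub : I ⊆ Finset.univ.erase m₀ :=
    fun x hx => Finset.mem_erase.2 ⟨fun he => hm₀ (he ▸ hx), Finset.mem_univ _⟩
  have hcardI : I.card ≤ L - 1 := by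
    have := Finset.card_le_card hIsub
    simpa [Finset.card_erase_of_mem, Finset.card_univ] using this
  have hcard : ((Finset.univ.erase m₀) \ I).card = L - 1 - I.card := by
    rw [Finset.card_sdiff_of_subset hIsub]
    simp [Finset.card_erase_of_mem, Finset.card_univ]
  have key : ∀ h, η ^ (2 * (L - I.card)) * b h ≤ c h := by
    intro h
    have hP : b h * (η ^ 2) ^ (L - 1 - I.card) ≤ ∏ ℓ ∈ Finset.univ.erase m₀, ((w ℓ h) ^ 2 + η ^ 2) := by
      rw [← Finset.prod_sdiff hIsub]
      have h1 : (η ^ 2) ^ (L - 1 - I.card) ≤ ∏ ℓ ∈ (Finset.univ.erase m₀) \ I, ((w ℓ h) ^ 2 + η ^ 2) := by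
        rw [← hcard, ← Finset.prod_const]
        exact Finset.prod_le_prod (fun m _ => by positivity) (fun m _ => by nlinarith [sq_nonneg (w m h)])
      calc b h * (η ^ 2) ^ (L - 1 - I.card)
          ≤ b h * ∏ ℓ ∈ (Finset.univ.erase m₀) \ I, ((w ℓ h) ^ 2 + η ^ 2) := by
            exact mul_le_mul_of_nonneg_left h1 (hb0 h)
        _ = (∏ ℓ ∈ (Finset.univ.erase m₀) \ I, ((w ℓ h) ^ 2 + η ^ 2)) * b h := mul_comm _ _
    have hsplit1 : (∏ ℓ, ((w ℓ h) ^ 2 + η ^ 2)) =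
        ((w m₀ h) ^ 2 + η ^ 2) * ∏ ℓ ∈ Finset.univ.erase m₀, ((w ℓ h) ^ 2 + η ^ 2) := by
      rw [← Finset.mul_prod_erase _ _ (Finset.mem_univ m₀)]
    have hsplit2 : (∏ ℓ, (w ℓ h) ^ 2) =
        (w m₀ h) ^ 2 * ∏ ℓ ∈ Finset.univ.erase m₀, (w ℓ h) ^ 2 := by
      rw [← Finset.mul_prod_erase _ _ (Finset.mem_univ m₀)]
    have hPP : (∏ ℓ ∈ Finset.univ.erase m₀, (w ℓ h) ^ 2)
        ≤ ∏ ℓ ∈ Finset.univ.erase m₀, ((w ℓ h) ^ 2 + η ^ 2) :=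
      Finset.prod_le_prod (fun m _ => sq_nonneg _) (fun m _ => by nlinarith [sq_nonneg η])
    have hc_ge : η ^ 2 * ∏ ℓ ∈ Finset.univ.erase m₀, ((w ℓ h) ^ 2 + η ^ 2) ≤ c h := by
      rw [hc_def]
      simp only [hsplit1, hsplit2]
      nlinarith [sq_nonneg (w m₀ h), sq_nonneg η, hPP]
    have hexp : η ^ (2 * (L - I.card)) = η ^ 2 * (η ^ 2) ^ (L - 1 - I.card) := by
      rw [pow_mul, ← pow_succ']
      congr 1
      omega
    calc η ^ (2 * (L - I.card)) * b h
        = η ^ 2 * (b h * (η ^ 2) ^ (L - 1 - I.card)) := by rw [hexp]; ring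
      _ ≤ η ^ 2 * ∏ ℓ ∈ Finset.univ.erase m₀, ((w ℓ h) ^ 2 + η ^ 2) :=
          mul_le_mul_of_nonneg_left hP (by positivity)
      _ ≤ c h := hc_ge
  have hηk : (0:ℝ) < η ^ (2 * (L - I.card)) := by positivity
  have hsumbc : ∑ h, b h ≤ (η ^ (2 * (L - I.card)))⁻¹ * ∑ h, c h := by
    rw [le_inv_mul_iff₀ hηk, Finset.mul_sum]
    exact Finset.sum_le_sum fun h _ => key h
  refine ⟨?_, ?_, ?_⟩
  · apply Real.sqrt_le_sqrt
    simp only [Matrix.diagonal_transpose, Matrix.diagonal_mul_diagonal, Matrix.trace_diagonal]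
    exact Finset.sum_le_sum fun h _ => by
      have := hab h; have := ha0 h
      nlinarith
  · simp only [Matrix.diagonal_transpose, Matrix.diagonal_mul_diagonal, Matrix.trace_sub,
      Matrix.trace_diagonal]
    have h1 : Real.sqrt (∑ h, b h * b h) ≤ ∑ h, b h := by
      rw [show (∑ h, b h * b h) = ∑ h, (b h) ^ 2 by simp [sq]]
      calc Real.sqrt (∑ h, (b h) ^ 2)
          ≤ Real.sqrt ((∑ h, b h) ^ 2) :=
            Real.sqrt_le_sqrt (Finset.sum_sq_le_sq_sum_of_nonneg fun h _ => hb0 h)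
        _ = ∑ h, b h := Real.sqrt_sq (Finset.sum_nonneg fun h _ => hb0 h)
    refine h1.trans ?_
    rw [← Finset.sum_sub_distrib]
    exact hsumbc
  · simp only [Matrix.diagonal_transpose, Matrix.diagonal_mul_diagonal, Matrix.trace_sub,
      Matrix.trace_diagonal]
    rw [← Finset.sum_sub_distrib]
    refine le_trans ?_ hsumbc
    refine Finset.sum_le_sum fun h _ => ?_
    calc (∏ m ∈ I, w m h) * (∏ m ∈ I, w m h) = a h := by
          rw [ha_def, ← Finset.prod_mul_distrib]; simp [sq]
      _ ≤ b h := hab h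
end
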